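/- Let (Ω, F, P) be a probability space with a filtration (F_j)_{j≥0}, let L : ℝ^p → ℝ be differentiable with L(θ) ≥ L_inf for all θ, and let (θ_j)_{j≥0} be an (F_j)-adapted sequence of ℝ^p-valued random vectors such that L(θ_j) and ‖∇L(θ_j)‖² are integrable for every j. Let (α_j)_{j≥0} be positive reals with Σ_j α_j = ∞ and Σ_j α_j² < ∞, and suppose there are constants U > 0 and C ≥ 0 such that for every j, E[L(θ_{j+1}) | F_j] ≤ L(θ_j) − α_j U ‖∇L(θ_j)‖² + α_j² C almost surely. For K ∈ ℕ set A_{K+1} = Σ_{j=0}^{K} α_j. Then for every ε > 0, lim_{K→∞} (1/A_{K+1}) Σ_{j=0}^{K} α_j P(‖∇L(θ_j)‖ ≥ ε) = 0; that is, if for each K a random index j(K) ∈ {0, 1, …, K} is drawn (independently of the trajectory given K) with probabilities proportional to (α_j)_{j=0}^{K}, then ‖∇L(θ_{j(K)})‖ → 0 in probability as K → ∞. -/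

import Mathlib

/-!
Taking expectations in the descent inequality and telescoping bounds
`∑ α_j E‖∇L(θ_j)‖²` uniformly by `(E L(θ_0) - L_inf + C ∑ α_j²) / U`. By Chebyshev's
inequality the weighted sums `∑ α_j P(‖∇L(θ_j)‖ ≥ ε)` are then bounded too, and dividing a bounded
quantity by `A_{K+1} → ∞` gives the limit `0`.
-/

open MeasureTheory Filter Finset
open scoped MeasureTheory Topology

theorem integral_le_integral_of_condExp_le {Ω : Type*} {m m0 : MeasurableSpace Ω}
    {μ : Measure Ω} [IsFiniteMeasure μ] (hm : m ≤ m0) {f g : Ω → ℝ}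
    (h : μ[f|m] ≤ᵐ[μ] g) (hg : Integrable g μ) :
    ∫ ω, f ω ∂μ ≤ ∫ ω, g ω ∂μ := by
  rw [← integral_condExp hm]
  exact integral_mono_ae integrable_condExp hg h

theorem toReal_measure_le_norm_le_integral_sq_div {Ω E : Type*} {m0 : MeasurableSpace Ω}
    [NormedAddCommGroup E] {μ : Measure Ω} {X : Ω → E}
    (hX : Integrable (fun ω => ‖X ω‖ ^ 2) μ) {ε : ℝ} (hε : 0 < ε) :
    (μ {ω | ε ≤ ‖X ω‖}).toReal ≤ (∫ ω, ‖X ω‖ ^ 2 ∂μ) / ε ^ 2 := by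
  have hset : {ω | ε ≤ ‖X ω‖} = {ω | ε ^ 2 ≤ ‖X ω‖ ^ 2} := by
    ext ω
    exact (pow_le_pow_iff_left₀ hε.le (norm_nonneg _) two_ne_zero).symm
  rw [le_div_iff₀ (pow_pos hε 2), mul_comm, hset]
  exact mul_meas_ge_le_integral_of_nonneg (ae_of_all _ fun ω => sq_nonneg _) hX _

theorem sum_range_le_of_le_sub_add {e a b : ℕ → ℝ} (h : ∀ j, e (j + 1) ≤ e j - a j + b j)
    (n : ℕ) : ∑ j ∈ range n, a j ≤ e 0 - e n + ∑ j ∈ range n, b j := by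
  rw [← sum_range_sub' e, ← sum_add_distrib]
  exact sum_le_sum fun j _ => by linarith [h j]

theorem sum_range_mul_le_of_descent {e E α : ℕ → ℝ} {Linf U C : ℝ}
    (hU : 0 < U) (hC : 0 ≤ C)
    (hsq : Summable (fun j => α j ^ 2)) (hlb : ∀ n, Linf ≤ e n)
    (hstep : ∀ j, e (j + 1) ≤ e j - α j * U * E j + α j ^ 2 * C) (n : ℕ) :
    ∑ j ∈ range n, α j * E j ≤ (e 0 - Linf + C * ∑' j, α j ^ 2) / U := by
  have htel : ∑ j ∈ range n, α j * U * E j ≤ e 0 - e n + ∑ j ∈ range n, α j ^ 2 * C :=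
    sum_range_le_of_le_sub_add hstep n
  have hsq_le : ∑ j ∈ range n, α j ^ 2 ≤ ∑' j, α j ^ 2 :=
    hsq.sum_le_tsum _ fun j _ => sq_nonneg _
  have hfactor : ∑ j ∈ range n, α j * U * E j = U * ∑ j ∈ range n, α j * E j := by
    rw [mul_sum]
    exact sum_congr rfl fun j _ => by ring
  rw [hfactor, ← sum_mul] at htel
  rw [le_div_iff₀ hU]
  nlinarith [hlb n, mul_le_mul_of_nonneg_left hsq_le hC]

theorem tendsto_weighted_average_of_sum_le {α s : ℕ → ℝ} {B : ℝ} (hα : ∀ j, 0 ≤ α j)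
    (hdiv : ¬ Summable α) (hs : ∀ j, 0 ≤ s j)
    (hB : ∀ n, ∑ j ∈ range n, α j * s j ≤ B) :
    Tendsto (fun K => (1 / ∑ j ∈ range (K + 1), α j) * ∑ j ∈ range (K + 1), α j * s j)
      atTop (𝓝 0) := by
  have hA : Tendsto (fun K => ∑ j ∈ range (K + 1), α j) atTop atTop :=
    ((not_summable_iff_tendsto_nat_atTop_of_nonneg hα).mp hdiv).comp
      (tendsto_add_atTop_nat 1)
  have hinv : Tendsto (fun K => (1 / ∑ j ∈ range (K + 1), α j) * B) atTop (𝓝 0) := by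
    simpa only [one_div, Pi.inv_apply, zero_mul] using hA.inv_tendsto_atTop.mul_const B
  have hinv_nonneg : ∀ K, 0 ≤ 1 / ∑ j ∈ range (K + 1), α j := fun K =>
    one_div_nonneg.2 (sum_nonneg fun j _ => hα j)
  exact tendsto_of_tendsto_of_tendsto_of_le_of_le tendsto_const_nhds hinv
    (fun K => mul_nonneg (hinv_nonneg K) (sum_nonneg fun j _ => mul_nonneg (hα j) (hs j)))
    (fun K => mul_le_mul_of_nonneg_left (hB (K + 1)) (hinv_nonneg K))

theorem stmt_16_general (p : ℕ)
    {Ω : Type*} {m0 : MeasurableSpace Ω} (P : Measure Ω) [IsProbabilityMeasure P]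
    (ℱ : Filtration ℕ m0)
    (Lf : EuclideanSpace ℝ (Fin p) → ℝ)
    (gradL : EuclideanSpace ℝ (Fin p) → EuclideanSpace ℝ (Fin p))
    (Linf : ℝ) (hlb : ∀ x, Linf ≤ Lf x)
    (θ : ℕ → Ω → EuclideanSpace ℝ (Fin p))
    (hLint : ∀ j, Integrable (fun ω => Lf (θ j ω)) P)
    (hGint : ∀ j, Integrable (fun ω => ‖gradL (θ j ω)‖ ^ 2) P)
    (α : ℕ → ℝ) (hαpos : ∀ j, 0 < α j)
    (hdiv : ¬ Summable α) (hsq : Summable (fun j => α j ^ 2))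
    (U C : ℝ) (hU : 0 < U) (hC : 0 ≤ C)
    (hrec : ∀ j, P[fun ω => Lf (θ (j + 1) ω)|ℱ j] ≤ᵐ[P]
      fun ω => Lf (θ j ω) - α j * U * ‖gradL (θ j ω)‖ ^ 2 + α j ^ 2 * C) :
    ∀ ε : ℝ, 0 < ε →
      Tendsto
        (fun K => (1 / (∑ j ∈ Finset.range (K + 1), α j)) *
          ∑ j ∈ Finset.range (K + 1),
            α j * (P {ω | ε ≤ ‖gradL (θ j ω)‖}).toReal)
        atTop (nhds 0) := by
  intro ε hε
  set E : ℕ → ℝ := fun j => ∫ ω, ‖gradL (θ j ω)‖ ^ 2 ∂P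
  set e : ℕ → ℝ := fun j => ∫ ω, Lf (θ j ω) ∂P
  have hstep : ∀ j, e (j + 1) ≤ e j - α j * U * E j + α j ^ 2 * C := fun j => by
    have hsub : Integrable (fun ω => Lf (θ j ω) - α j * U * ‖gradL (θ j ω)‖ ^ 2) P :=
      (hLint j).sub ((hGint j).const_mul _)
    have := integral_le_integral_of_condExp_le (ℱ.le j) (hrec j) (hsub.add (integrable_const _))
    rwa [integral_add hsub (integrable_const _),
      integral_sub (hLint j) ((hGint j).const_mul _), integral_const_mul,
      integral_const, probReal_univ, one_smul] at this
  have hlb_e : ∀ n, Linf ≤ e n := fun n => by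
    simpa using integral_mono (integrable_const Linf) (hLint n) fun ω => hlb _
  refine tendsto_weighted_average_of_sum_le (fun j => (hαpos j).le) hdiv
    (fun j => ENNReal.toReal_nonneg) (B := (e 0 - Linf + C * ∑' j, α j ^ 2) / U / ε ^ 2)
    fun n => ?_
  calc ∑ j ∈ range n, α j * (P {ω | ε ≤ ‖gradL (θ j ω)‖}).toReal
      ≤ ∑ j ∈ range n, α j * (E j / ε ^ 2) := sum_le_sum fun j _ =>
        mul_le_mul_of_nonneg_left (toReal_measure_le_norm_le_integral_sq_div (hGint j) hε)
          (hαpos j).le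
    _ = (∑ j ∈ range n, α j * E j) / ε ^ 2 := by simp only [sum_div, mul_div_assoc]
    _ ≤ _ := div_le_div_of_nonneg_right
        (sum_range_mul_le_of_descent hU hC hsq hlb_e hstep n) (pow_pos hε 2).le

/-- Convergence in probability of the gradient norm at a randomly selected iterate:
for every `ε > 0`, the `(α_j)`-weighted average over `j ∈ {0,…,K}` of
`P(‖∇L(θ_j)‖ ≥ ε)` tends to `0`, i.e. if `j(K)` is sampled with probabilities
proportional to `(α_j)_{j≤K}` then `‖∇L(θ_{j(K)})‖ → 0` in probability. -/
theorem stmt_16 (p : ℕ)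
    {Ω : Type*} {m0 : MeasurableSpace Ω} (P : Measure Ω) [IsProbabilityMeasure P]
    (ℱ : Filtration ℕ m0)
    (Lf : EuclideanSpace ℝ (Fin p) → ℝ)
    (gradL : EuclideanSpace ℝ (Fin p) → EuclideanSpace ℝ (Fin p))
    (hgrad : ∀ x, HasGradientAt Lf (gradL x) x)
    (Linf : ℝ) (hlb : ∀ x, Linf ≤ Lf x)
    (θ : ℕ → Ω → EuclideanSpace ℝ (Fin p))
    (hadapted : Adapted ℱ θ)
    (hLint : ∀ j, Integrable (fun ω => Lf (θ j ω)) P)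
    (hGint : ∀ j, Integrable (fun ω => ‖gradL (θ j ω)‖ ^ 2) P)
    (α : ℕ → ℝ) (hαpos : ∀ j, 0 < α j)
    (hdiv : ¬ Summable α) (hsq : Summable (fun j => α j ^ 2))
    (U C : ℝ) (hU : 0 < U) (hC : 0 ≤ C)
    (hrec : ∀ j, P[fun ω => Lf (θ (j + 1) ω)|ℱ j] ≤ᵐ[P]
      fun ω => Lf (θ j ω) - α j * U * ‖gradL (θ j ω)‖ ^ 2 + α j ^ 2 * C) :
    ∀ ε : ℝ, 0 < ε →
      Tendsto
        (fun K => (1 / (∑ j ∈ Finset.range (K + 1), α j)) *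
          ∑ j ∈ Finset.range (K + 1),
            α j * (P {ω | ε ≤ ‖gradL (θ j ω)‖}).toReal)
        atTop (nhds 0) :=
  stmt_16_general p P ℱ Lf gradL Linf hlb θ hLint hGint α hαpos hdiv hsq U C hU hC hrec
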